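/- arXiv:2306.05412 — 6 statements merged into one kernel-verified Lean document; each statement's English description precedes it below -/
import Mathlib

section
/- Let β be a measure on a measurable space α, let A : α → ℝ be β-integrable with ∫ A dβ = 0, and suppose A is not β-almost-everywhere equal to 0. Let ω : ℝ → ℝ be strictly increasing such that a ↦ ω(A(a)) · A(a) is β-integrable. Then ∫ ω(A(a)) · A(a) dβ(a) > 0. -/
open MeasureTheory

theorem odpr_inner_integral_pos {α : Type*} [MeasurableSpace α] (β : Measure α)
    (A : α → ℝ) (hA : Integrable A β) (hA0 : ∫ a, A a ∂β = 0)
    (hAne : ¬ (A =ᵐ[β] fun _ => (0 : ℝ)))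
    (ω : ℝ → ℝ) (hω : StrictMono ω) (hint : Integrable (fun a => ω (A a) * A a) β) :
    0 < ∫ a, ω (A a) * A a ∂β := by
  set f : α → ℝ := fun a => (ω (A a) - ω 0) * A a with hf
  have hfint : Integrable f β := by
    have : f = fun a => ω (A a) * A a - ω 0 * A a := by
      funext a; ring
    rw [this]
    exact hint.sub (hA.const_mul _)
  have hfnonneg : ∀ a, 0 ≤ f a := by
    intro a
    show 0 ≤ (ω (A a) - ω 0) * A a
    rcases lt_trichotomy (A a) 0 with h | h | h
    · have := hω h
      nlinarith
    · simp [hf, h]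
    · have := hω h
      nlinarith
  have hfeq : ∫ a, f a ∂β = ∫ a, ω (A a) * A a ∂β := by
    have : f = fun a => ω (A a) * A a - ω 0 * A a := by
      funext a; ring
    rw [this, integral_sub hint (hA.const_mul _), integral_const_mul, hA0]
    ring
  have hpos : 0 < ∫ a, f a ∂β := by
    rcases (integral_nonneg (f := f) hfnonneg).lt_or_eq with h | h
    · exact h
    · exfalso
      have := (integral_eq_zero_iff_of_nonneg hfnonneg hfint).mp h.symm
      apply hAne
      filter_upwards [this] with a ha
      simp only [Pi.zero_apply] at ha
      by_contra hA0'
      rcases lt_trichotomy (A a) 0 with h' | h' | h'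
      · have := hω h'; simp only [hf] at ha; nlinarith
      · exact hA0' h'
      · have := hω h'; simp only [hf] at ha; nlinarith
  linarith [hfeq ▸ hpos]
end

section
/- Let β be a probability measure on a measurable space α, let r : α → ℝ be β-integrable, and set A(a) := r(a) − ∫ r dβ. Let ω : ℝ → ℝ be nonnegative and monotone nondecreasing, and suppose a ↦ ω(A(a)) and a ↦ ω(A(a))·r(a) are β-integrable and Z := ∫ ω(A(a)) dβ(a) satisfies Z > 0. Let β′ be the probability measure with density ω(A(·))/Z with respect to β. Then ∫ r dβ′ ≥ ∫ r dβ. -/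
open MeasureTheory ENNReal NNReal

theorem odpr_behavior_policy_improvement {α : Type*} [MeasurableSpace α] (β : Measure α)
    [IsProbabilityMeasure β]
    (r : α → ℝ) (hr : Integrable r β)
    (A : α → ℝ) (hA : A = fun a => r a - ∫ b, r b ∂β)
    (ω : ℝ → ℝ) (hω0 : ∀ x, 0 ≤ ω x) (hω : Monotone ω)
    (hωA : Integrable (fun a => ω (A a)) β)
    (hωAr : Integrable (fun a => ω (A a) * r a) β)
    (Z : ℝ) (hZ : Z = ∫ a, ω (A a) ∂β) (hZpos : 0 < Z)
    (β' : Measure α)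
    (hβ' : β' = β.withDensity (fun a => ENNReal.ofReal (ω (A a) / Z))) :
    ∫ a, r a ∂β ≤ ∫ a, r a ∂β' := by
  set μ : ℝ := ∫ b, r b ∂β with hμ
  -- pointwise comonotonicity
  have h1 : ∀ a, ω 0 * A a ≤ ω (A a) * A a := by
    intro a
    rcases le_total 0 (A a) with h | h
    · exact mul_le_mul_of_nonneg_right (hω h) h
    · exact mul_le_mul_of_nonpos_right (hω h) h
  have hAint : Integrable A β := by
    rw [hA]; exact hr.sub (integrable_const _)
  have hAzero : ∫ a, A a ∂β = 0 := by
    rw [hA, integral_sub hr (integrable_const _), integral_const]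
    simp [hμ]
  have hωAA : Integrable (fun a => ω (A a) * A a) β := by
    have : (fun a => ω (A a) * A a) = fun a => ω (A a) * r a - ω (A a) * μ := by
      funext a; rw [hA]; ring
    rw [this]
    exact hωAr.sub (hωA.mul_const μ)
  have h2 : 0 ≤ ∫ a, ω (A a) * A a ∂β := by
    have := integral_mono (hAint.const_mul (ω 0)) hωAA h1
    rwa [integral_const_mul, hAzero, mul_zero] at this
  -- ∫ ω(A) r ≥ μ Z
  have h3 : μ * Z ≤ ∫ a, ω (A a) * r a ∂β := by
    have : ∫ a, ω (A a) * r a ∂β = (∫ a, ω (A a) * A a ∂β) + μ * Z := by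
      rw [hZ, ← integral_const_mul μ, ← integral_add hωAA (hωA.const_mul μ)]
      congr 1; funext a; rw [hA]; ring
    rw [this]; linarith
  -- compute ∫ r dβ'
  have hAm : AEMeasurable A β := hAint.aemeasurable
  have hdens : AEMeasurable (fun a => (ω (A a) / Z).toNNReal) β := by
    exact (measurable_real_toNNReal.comp ((hω.measurable.comp_aemeasurable hAm).div_const Z).measurable_mk).aemeasurable.congr
      (((hω.measurable.comp_aemeasurable hAm).div_const Z).ae_eq_mk.symm.fun_comp Real.toNNReal)
  have hβ'int : ∫ a, r a ∂β' = ∫ a, (ω (A a) / Z) * r a ∂β := by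
    rw [hβ']
    have : (fun a => ENNReal.ofReal (ω (A a) / Z)) =
        fun a => ((fun a => (ω (A a) / Z).toNNReal) a : ℝ≥0∞) := by
      funext a; simp [ENNReal.ofReal]
    rw [this, integral_withDensity_eq_integral_smul₀ hdens r]
    congr 1; funext a
    rw [NNReal.smul_def, smul_eq_mul, Real.coe_toNNReal _ (div_nonneg (hω0 _) hZpos.le)]
  rw [hβ'int]
  have : ∫ a, (ω (A a) / Z) * r a ∂β = (1 / Z) * ∫ a, ω (A a) * r a ∂β := by
    rw [← integral_const_mul]; congr 1; funext a; ring
  rw [this]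
  calc μ = (1 / Z) * (μ * Z) := by field_simp
    _ ≤ (1 / Z) * ∫ a, ω (A a) * r a ∂β := by
        apply mul_le_mul_of_nonneg_left h3 (by positivity)
end

section
/- Let β be a probability measure on a measurable space α, let r : α → ℝ be β-integrable, and set A(a) := r(a) − ∫ r dβ. Suppose r is not β-almost-everywhere equal to the constant ∫ r dβ. Let ω : ℝ → ℝ be nonnegative and strictly increasing, and suppose a ↦ ω(A(a)) and a ↦ ω(A(a))·r(a) are β-integrable. Then Z := ∫ ω(A(a)) dβ(a) satisfies Z > 0, and the probability measure β′ with density ω(A(·))/Z with respect to β satisfies ∫ r dβ′ > ∫ r dβ. -/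
open MeasureTheory
open scoped NNReal ENNReal

theorem odpr_behavior_policy_improvement_strict {α : Type*} [MeasurableSpace α]
    (β : Measure α) [IsProbabilityMeasure β]
    (r : α → ℝ) (hr : Integrable r β)
    (A : α → ℝ) (hA : A = fun a => r a - ∫ b, r b ∂β)
    (hrne : ¬ (r =ᵐ[β] fun _ => ∫ b, r b ∂β))
    (ω : ℝ → ℝ) (hω0 : ∀ x, 0 ≤ ω x) (hω : StrictMono ω)
    (hωA : Integrable (fun a => ω (A a)) β)
    (hωAr : Integrable (fun a => ω (A a) * r a) β)
    (Z : ℝ) (hZ : Z = ∫ a, ω (A a) ∂β)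
    (β' : Measure α)
    (hβ' : β' = β.withDensity (fun a => ENNReal.ofReal (ω (A a) / Z))) :
    0 < Z ∧ ∫ a, r a ∂β < ∫ a, r a ∂β' := by
  set μ := ∫ b, r b ∂β with hμ
  have hAint : Integrable A β := by
    rw [hA]; exact hr.sub (integrable_const _)
  have hAzero : ∫ a, A a ∂β = 0 := by
    rw [hA, integral_sub hr (integrable_const _), integral_const, probReal_univ]
    simp [hμ]
  have hωAA : Integrable (fun a => ω (A a) * A a) β := by
    have : (fun a => ω (A a) * A a) = fun a => ω (A a) * r a - μ * ω (A a) := by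
      funext a; rw [hA]; ring
    rw [this]
    exact hωAr.sub (hωA.const_mul μ)
  have hgnn : ∀ a, 0 ≤ (ω (A a) - ω 0) * A a := by
    intro a
    rcases lt_trichotomy (A a) 0 with h | h | h
    · nlinarith [hω h]
    · simp [h]
    · nlinarith [hω h]
  have hgint : Integrable (fun a => (ω (A a) - ω 0) * A a) β := by
    have : (fun a => (ω (A a) - ω 0) * A a) = fun a => ω (A a) * A a - ω 0 * A a := by
      funext a; ring
    rw [this]
    exact hωAA.sub (hAint.const_mul _)
  have hAne : ¬ (A =ᵐ[β] fun _ => (0 : ℝ)) := by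
    intro h
    apply hrne
    filter_upwards [h] with a ha
    have h2 : r a - μ = 0 := by rw [hA] at ha; exact ha
    simpa using by linarith
  have hgne : ¬ ((fun a => (ω (A a) - ω 0) * A a) =ᵐ[β] fun _ => (0 : ℝ)) := by
    intro h
    apply hAne
    filter_upwards [h] with a ha
    by_contra hA0
    rcases lt_or_gt_of_ne hA0 with h' | h'
    · have h1 : ω (A a) < ω 0 := hω h'
      nlinarith
    · have h1 : ω 0 < ω (A a) := hω h'
      nlinarith
  have hgpos : 0 < ∫ a, (ω (A a) - ω 0) * A a ∂β := by
    rcases (integral_nonneg (f := fun a => (ω (A a) - ω 0) * A a) hgnn).lt_or_eq with h | h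
    · exact h
    · exact absurd ((integral_eq_zero_iff_of_nonneg (fun a => hgnn a) hgint).mp h.symm) hgne
  have hkey : 0 < ∫ a, ω (A a) * A a ∂β := by
    have hs : ∫ a, (ω (A a) - ω 0) * A a ∂β
        = ∫ a, ω (A a) * A a ∂β - ω 0 * ∫ a, A a ∂β := by
      rw [← integral_const_mul, ← integral_sub hωAA (hAint.const_mul _)]
      congr 1; funext a; ring
    rw [hs, hAzero] at hgpos; linarith
  have hZpos : 0 < Z := by
    rcases (hZ ▸ integral_nonneg fun a => hω0 (A a)).lt_or_eq with h | h
    · exact h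
    · exfalso
      have h0 : (fun a => ω (A a)) =ᵐ[β] fun _ => (0 : ℝ) :=
        (integral_eq_zero_iff_of_nonneg (fun a => hω0 (A a)) hωA).mp (hZ ▸ h.symm)
      have hz : ∫ a, ω (A a) * A a ∂β = 0 := by
        apply integral_eq_zero_of_ae
        filter_upwards [h0] with a ha
        simp [ha]
      linarith
  refine ⟨hZpos, ?_⟩
  have hfmeas : AEMeasurable (fun a => (ω (A a) / Z).toNNReal) β :=
    measurable_real_toNNReal.comp_aemeasurable (hωA.aemeasurable.div_const Z)
  have hint' : ∫ a, r a ∂β' = ∫ a, (ω (A a) / Z) * r a ∂β := by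
    rw [hβ']
    have hd : (fun a => ENNReal.ofReal (ω (A a) / Z))
        = fun a => (((ω (A a) / Z).toNNReal : ℝ≥0) : ℝ≥0∞) := by
      funext a; rfl
    rw [hd, integral_withDensity_eq_integral_smul₀ hfmeas]
    congr 1; funext a
    rw [NNReal.smul_def, smul_eq_mul, Real.coe_toNNReal _ (div_nonneg (hω0 _) hZpos.le)]
  rw [hint']
  have h1 : ∫ a, ω (A a) / Z * r a ∂β = (1 / Z) * ∫ a, ω (A a) * r a ∂β := by
    rw [← integral_const_mul]; congr 1; funext a; ring
  have hsplit : ∫ a, ω (A a) * r a ∂β = ∫ a, ω (A a) * A a ∂β + μ * Z := by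
    have he : (fun a => ω (A a) * r a) = fun a => ω (A a) * A a + μ * ω (A a) := by
      funext a; rw [hA]; ring
    rw [he, integral_add hωAA (hωA.const_mul μ), integral_const_mul, hZ]
  rw [h1, hsplit]
  rw [show (1 / Z) * (∫ a, ω (A a) * A a ∂β + μ * Z)
      = (∫ a, ω (A a) * A a ∂β) / Z + μ by field_simp]
  have : 0 < (∫ a, ω (A a) * A a ∂β) / Z := div_pos hkey hZpos
  linarith
end

section
/- Let ι be a finite nonempty type, let β : ι → ℝ satisfy β(i) ≥ 0 for all i and ∑_i β(i) = 1, and let Q : ι → ℝ. Set V := ∑_i β(i)·Q(i) and A(i) := Q(i) − V. Let ω : ℝ → ℝ be nonnegative and monotone nondecreasing, set Z := ∑_i β(i)·ω(A(i)), assume Z > 0, and define β′(i) := β(i)·ω(A(i))/Z. Then ∑_i β′(i)·Q(i) ≥ ∑_i β(i)·Q(i). -/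
theorem odpr_finite_improvement {ι : Type*} [Fintype ι] [Nonempty ι]
    (β : ι → ℝ) (hβ0 : ∀ i, 0 ≤ β i) (hβ1 : ∑ i, β i = 1)
    (Q : ι → ℝ)
    (V : ℝ) (hV : V = ∑ i, β i * Q i)
    (A : ι → ℝ) (hA : A = fun i => Q i - V)
    (ω : ℝ → ℝ) (hω0 : ∀ x, 0 ≤ ω x) (hω : Monotone ω)
    (Z : ℝ) (hZ : Z = ∑ i, β i * ω (A i)) (hZpos : 0 < Z)
    (β' : ι → ℝ) (hβ' : β' = fun i => β i * ω (A i) / Z) :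
    ∑ i, β i * Q i ≤ ∑ i, β' i * Q i := by
  subst hA hβ'
  -- ∑ β A = 0
  have hsum0 : ∑ i, β i * (Q i - V) = 0 := by
    have : ∑ i, β i * (Q i - V) = (∑ i, β i * Q i) - V * ∑ i, β i := by
      rw [Finset.mul_sum, ← Finset.sum_sub_distrib]
      congr 1; ext i; ring
    rw [this, hβ1, hV]; ring
  -- key: ∑ β ω(A) A ≥ 0
  have key : 0 ≤ ∑ i, β i * ω (Q i - V) * (Q i - V) := by
    have h1 : ∑ i, ω 0 * (β i * (Q i - V)) = 0 := by
      rw [← Finset.mul_sum, hsum0, mul_zero]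
    rw [← h1]
    apply Finset.sum_le_sum
    intro i _
    rcases le_total 0 (Q i - V) with h | h
    · have := hω h
      nlinarith [mul_nonneg (mul_nonneg (hβ0 i) (sub_nonneg.2 this)) h]
    · have := hω h
      nlinarith [mul_nonneg (mul_nonneg (hβ0 i) (sub_nonneg.2 this)) (neg_nonneg.2 h)]
  have hZ' : ∑ i, β i * ω (Q i - V) = Z := hZ.symm
  have expand : ∑ i, (fun i => β i * ω (Q i - V) / Z) i * Q i
      = ((∑ i, β i * ω (Q i - V) * (Q i - V)) + Z * V) / Z := by
    rw [← hZ']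
    rw [Finset.sum_mul, ← Finset.sum_add_distrib, Finset.sum_div]
    congr 1; ext i
    field_simp
    ring
  rw [expand, ← hV, ge_iff_le.symm, ge_iff_le, le_div_iff₀ hZpos]
  nlinarith
end

section
/- Let ι be a finite nonempty type, let β : ι → ℝ satisfy β(i) ≥ 0 for all i and ∑_i β(i) = 1, and let Q : ι → ℝ. Set V := ∑_i β(i)·Q(i) and A(i) := Q(i) − V. Let ω : ℝ → ℝ be nonnegative and strictly increasing, and suppose there exist indices i, j with β(i) > 0, β(j) > 0, and Q(i) ≠ Q(j). Then Z := ∑_i β(i)·ω(A(i)) satisfies Z > 0, and with β′(i) := β(i)·ω(A(i))/Z one has ∑_i β′(i)·Q(i) > ∑_i β(i)·Q(i). -/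
theorem odpr_finite_improvement_strict {ι : Type*} [Fintype ι] [Nonempty ι]
    (β : ι → ℝ) (hβ0 : ∀ i, 0 ≤ β i) (hβ1 : ∑ i, β i = 1)
    (Q : ι → ℝ)
    (V : ℝ) (hV : V = ∑ i, β i * Q i)
    (A : ι → ℝ) (hA : A = fun i => Q i - V)
    (ω : ℝ → ℝ) (hω0 : ∀ x, 0 ≤ ω x) (hω : StrictMono ω)
    (i j : ι) (hi : 0 < β i) (hj : 0 < β j) (hij : Q i ≠ Q j)
    (Z : ℝ) (hZ : Z = ∑ k, β k * ω (A k))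
    (β' : ι → ℝ) (hβ' : β' = fun k => β k * ω (A k) / Z) :
    0 < Z ∧ ∑ k, β k * Q k < ∑ k, β' k * Q k := by
  subst hA hβ'
  -- weighted mean of A is zero
  have h0 : ∑ k, β k * (Q k - V) = 0 := by
    have h : ∑ k, β k * (Q k - V) = (∑ k, β k * Q k) - (∑ k, β k) * V := by
      rw [Finset.sum_mul, ← Finset.sum_sub_distrib]
      exact Finset.sum_congr rfl fun k _ => by ring
    rw [h, hβ1, hV]; ring
  -- there is a supported index with positive advantage
  have hAij : Q i - V ≠ Q j - V := by
    intro h; exact hij (by linarith)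
  obtain ⟨k0, hk0β, hk0A⟩ : ∃ k, 0 < β k ∧ 0 < Q k - V := by
    by_contra hcon
    push_neg at hcon
    have hnp : ∀ k ∈ Finset.univ, β k * (Q k - V) ≤ 0 := by
      intro k _
      rcases lt_or_ge 0 (β k) with hk | hk
      · exact mul_nonpos_of_nonneg_of_nonpos (le_of_lt hk) (hcon k hk)
      · have : β k = 0 := le_antisymm hk (hβ0 k)
        simp [this]
    have hall : ∀ k ∈ Finset.univ, β k * (Q k - V) = 0 :=
      (Finset.sum_eq_zero_iff_of_nonpos hnp).mp h0
    have hzi : Q i - V = 0 := by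
      have := hall i (Finset.mem_univ i)
      exact (mul_eq_zero.mp this).resolve_left (ne_of_gt hi)
    have hzj : Q j - V = 0 := by
      have := hall j (Finset.mem_univ j)
      exact (mul_eq_zero.mp this).resolve_left (ne_of_gt hj)
    exact hAij (by rw [hzi, hzj])
  -- Z > 0
  have hZpos : 0 < Z := by
    rw [hZ]
    apply Finset.sum_pos' (fun k _ => mul_nonneg (hβ0 k) (hω0 _))
    exact ⟨k0, Finset.mem_univ k0,
      mul_pos hk0β (lt_of_le_of_lt (hω0 0) (hω hk0A))⟩
  -- key strict positivity of covariance-like sum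
  have hSpos : 0 < ∑ k, β k * ω (Q k - V) * (Q k - V) := by
    have hdec : ∀ k, β k * ω (Q k - V) * (Q k - V)
        = β k * ((ω (Q k - V) - ω 0) * (Q k - V)) + ω 0 * (β k * (Q k - V)) := by
      intro k; ring
    have hterm : ∀ k, 0 ≤ β k * ((ω (Q k - V) - ω 0) * (Q k - V)) := by
      intro k
      apply mul_nonneg (hβ0 k)
      rcases le_or_gt 0 (Q k - V) with h | h
      · exact mul_nonneg (by have := hω.monotone h; linarith) h
      · nlinarith [hω.monotone h.le]
    have hstr : 0 < β k0 * ((ω (Q k0 - V) - ω 0) * (Q k0 - V)) := by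
      apply mul_pos hk0β
      exact mul_pos (by have := hω hk0A; linarith) hk0A
    have h1 : 0 < ∑ k, β k * ((ω (Q k - V) - ω 0) * (Q k - V)) :=
      Finset.sum_pos' (fun k _ => hterm k) ⟨k0, Finset.mem_univ k0, hstr⟩
    calc 0 < ∑ k, β k * ((ω (Q k - V) - ω 0) * (Q k - V)) := h1
      _ = ∑ k, β k * ω (Q k - V) * (Q k - V) := by
          simp only [hdec, Finset.sum_add_distrib, ← Finset.mul_sum, h0]
          ring
  refine ⟨hZpos, ?_⟩
  have hZ' : Z = ∑ k, β k * ω (Q k - V) := by simpa using hZ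
  have hsum' : ∑ k, β k * ω (Q k - V) / Z * Q k
      = ((∑ k, β k * ω (Q k - V) * (Q k - V)) + V * Z) / Z := by
    rw [eq_div_iff (ne_of_gt hZpos), Finset.sum_mul]
    have hterm : ∀ k, β k * ω (Q k - V) / Z * Q k * Z
        = β k * ω (Q k - V) * (Q k - V) + V * (β k * ω (Q k - V)) := by
      intro k; field_simp; ring
    simp only [hterm, Finset.sum_add_distrib, ← Finset.mul_sum, ← hZ']
  simp only
  calc ∑ k, β k * Q k = V := hV.symm
    _ < ((∑ k, β k * ω (Q k - V) * (Q k - V)) + V * Z) / Z := by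
        rw [lt_div_iff₀ hZpos]; nlinarith
    _ = ∑ k, β k * ω (Q k - V) / Z * Q k := hsum'.symm
end

section
/- Let α be a measurable space, let r : α → ℝ be measurable and bounded, and let ω : ℝ → ℝ be monotone nondecreasing with ω(x) > 0 for all x. Define a sequence of measures recursively: μ₀ is a probability measure on α, and given μ_k, set m_k := ∫ r dμ_k, Z_k := ∫ ω(r(a) − m_k) dμ_k(a), and let μ_{k+1} be the probability measure with density ω(r(·) − m_k)/Z_k with respect to μ_k. Then for every k, μ_k is a probability measure, 0 < Z_k < ∞, and m_{k+1} ≥ m_k; in particular the sequence (m_k) of expected rewards is monotone nondecreasing. -/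
open MeasureTheory
open scoped NNReal ENNReal

lemma odpr_step {α : Type*} [MeasurableSpace α]
    (r : α → ℝ) (hrm : Measurable r) (C : ℝ) (hrb : ∀ a, |r a| ≤ C)
    (ω : ℝ → ℝ) (hω : Monotone ω) (hωpos : ∀ x, 0 < ω x)
    (ν : Measure α) (hν : IsProbabilityMeasure ν)
    (m : ℝ) (hm : m = ∫ a, r a ∂ν)
    (Z : ℝ) (hZ : Z = ∫ a, ω (r a - m) ∂ν) :
    0 < Z ∧
      IsProbabilityMeasure (ν.withDensity (fun a => ENNReal.ofReal (ω (r a - m) / Z))) ∧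
      m ≤ ∫ a, r a ∂(ν.withDensity (fun a => ENNReal.ofReal (ω (r a - m) / Z))) := by
  have hne : Nonempty α := by
    by_contra h
    rw [not_nonempty_iff] at h
    have h1 : ν Set.univ = 1 := hν.measure_univ
    rw [Set.univ_eq_empty_iff.mpr h, measure_empty] at h1
    exact zero_ne_one h1
  obtain ⟨a0⟩ := hne
  have hC : 0 ≤ C := le_trans (abs_nonneg _) (hrb a0)
  -- integrability of r
  have hir : Integrable r ν :=
    Integrable.mono' (integrable_const C) hrm.aestronglyMeasurable
      (ae_of_all _ fun a => hrb a)
  -- |m| ≤ C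
  have hmb : |m| ≤ C := by
    rw [hm]
    calc |∫ a, r a ∂ν| ≤ ∫ a, |r a| ∂ν := by
          simpa [Real.norm_eq_abs] using norm_integral_le_integral_norm (μ := ν) r
      _ ≤ ∫ _a, C ∂ν := integral_mono hir.abs (integrable_const C) (fun a => hrb a)
      _ = C := by simp
  have hx : ∀ a, -(2 * C) ≤ r a - m ∧ r a - m ≤ 2 * C := by
    intro a
    have h1 := abs_le.mp (hrb a)
    have h2 := abs_le.mp hmb
    constructor <;> linarith [h1.1, h1.2, h2.1, h2.2]
  have hωmeas : Measurable ω := hω.measurable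
  have hg : Measurable (fun a => ω (r a - m)) := hωmeas.comp (hrm.sub measurable_const)
  have hgb : ∀ a, |ω (r a - m)| ≤ ω (2 * C) := by
    intro a
    rw [abs_of_pos (hωpos _)]
    exact hω (hx a).2
  have hiω : Integrable (fun a => ω (r a - m)) ν :=
    Integrable.mono' (integrable_const (ω (2 * C))) hg.aestronglyMeasurable
      (ae_of_all _ hgb)
  have hZpos : 0 < Z := by
    have : (ω (-(2 * C))) ≤ Z := by
      rw [hZ]
      calc ω (-(2 * C)) = ∫ _a, ω (-(2 * C)) ∂ν := by simp
        _ ≤ ∫ a, ω (r a - m) ∂ν :=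
          integral_mono (integrable_const _) hiω (fun a => hω (hx a).1)
    exact lt_of_lt_of_le (hωpos _) this
  set f : α → ℝ := fun a => ω (r a - m) / Z with hf
  have hfnn : ∀ a, 0 ≤ f a := fun a => div_nonneg (hωpos _).le hZpos.le
  have hfm : Measurable f := hg.div_const Z
  have hif : Integrable f ν := hiω.div_const Z
  have hintf : ∫ a, f a ∂ν = 1 := by
    simp only [hf, integral_div, ← hZ]
    exact div_self hZpos.ne'
  have hprob : IsProbabilityMeasure (ν.withDensity (fun a => ENNReal.ofReal (f a))) := by
    constructor
    rw [withDensity_apply _ MeasurableSet.univ, Measure.restrict_univ,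
      ← ofReal_integral_eq_lintegral_ofReal hif (ae_of_all _ hfnn), hintf, ENNReal.ofReal_one]
  refine ⟨hZpos, hprob, ?_⟩
  -- compute the new integral
  have hdens : (fun a => ENNReal.ofReal (f a)) = (fun a => ((Real.toNNReal (f a) : ℝ≥0) : ℝ≥0∞)) := rfl
  have htm : Measurable (fun a => Real.toNNReal (f a)) := hfm.real_toNNReal
  have hint' : ∫ a, r a ∂(ν.withDensity (fun a => ENNReal.ofReal (f a)))
      = ∫ a, f a * r a ∂ν := by
    rw [hdens, integral_withDensity_eq_integral_smul htm]
    congr 1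
    ext a
    rw [NNReal.smul_def, Real.coe_toNNReal _ (hfnn a), smul_eq_mul]
  rw [hint']
  -- bounded products are integrable
  have hifr : Integrable (fun a => f a * r a) ν := by
    refine Integrable.mono' (integrable_const (ω (2 * C) / Z * C))
      (hfm.mul hrm).aestronglyMeasurable (ae_of_all _ fun a => ?_)
    rw [Real.norm_eq_abs, abs_mul, abs_of_nonneg (hfnn a)]
    have h2' : f a ≤ ω (2 * C) / Z :=
      (div_le_div_iff_of_pos_right hZpos).mpr (hω (hx a).2)
    exact mul_le_mul h2' (hrb a) (abs_nonneg _) (div_nonneg (hωpos _).le hZpos.le)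
  have hifrm : Integrable (fun a => f a * (r a - m)) ν := by
    have : (fun a => f a * (r a - m)) = fun a => f a * r a - m * f a := by
      ext a; ring
    rw [this]
    exact hifr.sub (hif.const_mul m)
  -- key pointwise inequality
  have hpt : ∀ a, (ω 0 / Z) * (r a - m) ≤ f a * (r a - m) := by
    intro a
    have h : 0 ≤ (f a - ω 0 / Z) * (r a - m) := by
      rcases le_or_gt 0 (r a - m) with h1 | h1
      · apply mul_nonneg _ h1
        have h2 : ω 0 ≤ ω (r a - m) := hω (by linarith)
        simp only [hf, sub_nonneg]
        exact (div_le_div_iff_of_pos_right hZpos).mpr h2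
      · have h2 : ω (r a - m) ≤ ω 0 := hω (by linarith)
        have h3 : f a - ω 0 / Z ≤ 0 := by
          simp only [hf, sub_nonpos]
          exact (div_le_div_iff_of_pos_right hZpos).mpr h2
        nlinarith [h3, h1.le]
    nlinarith [h]
  have hkey : 0 ≤ ∫ a, f a * (r a - m) ∂ν := by
    have h1 : ∫ a, (ω 0 / Z) * (r a - m) ∂ν = 0 := by
      rw [integral_const_mul, integral_sub hir (integrable_const m)]
      simp [← hm]
    calc (0:ℝ) = ∫ a, (ω 0 / Z) * (r a - m) ∂ν := h1.symm
      _ ≤ ∫ a, f a * (r a - m) ∂ν :=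
        integral_mono ((hir.sub (integrable_const m)).const_mul _) hifrm hpt
  have hsplit : ∫ a, f a * (r a - m) ∂ν = (∫ a, f a * r a ∂ν) - m := by
    have : (fun a => f a * (r a - m)) = fun a => f a * r a - m * f a := by
      ext a; ring
    rw [this, integral_sub hifr (hif.const_mul m), integral_const_mul, hintf, mul_one]
  linarith [hkey, hsplit ▸ hkey]

theorem odpr_iterative_prioritization_monotone {α : Type*} [MeasurableSpace α]
    (r : α → ℝ) (hrm : Measurable r) (C : ℝ) (hrb : ∀ a, |r a| ≤ C)
    (ω : ℝ → ℝ) (hω : Monotone ω) (hωpos : ∀ x, 0 < ω x)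
    (μ : ℕ → Measure α) (h0 : IsProbabilityMeasure (μ 0))
    (m : ℕ → ℝ) (hm : ∀ k, m k = ∫ a, r a ∂(μ k))
    (Z : ℕ → ℝ) (hZ : ∀ k, Z k = ∫ a, ω (r a - m k) ∂(μ k))
    (hrec : ∀ k, μ (k + 1) =
      (μ k).withDensity (fun a => ENNReal.ofReal (ω (r a - m k) / Z k))) :
    ∀ k, IsProbabilityMeasure (μ k) ∧ 0 < Z k ∧ m k ≤ m (k + 1) := by
  have hP : ∀ k, IsProbabilityMeasure (μ k) := by
    intro k
    induction k with
    | zero => exact h0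
    | succ n ih =>
      have h := odpr_step r hrm C hrb ω hω hωpos (μ n) ih (m n) (hm n) (Z n) (hZ n)
      rw [hrec n]
      exact h.2.1
  intro k
  have h := odpr_step r hrm C hrb ω hω hωpos (μ k) (hP k) (m k) (hm k) (Z k) (hZ k)
  refine ⟨hP k, h.1, ?_⟩
  rw [hm (k + 1), hrec k]
  exact h.2.2
end
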